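/- Theorem 5.2(iii) (uniqueness of the extension with a given real eigenvalue). Assume Im V(x) ≥ 0 for almost every x ∈ (0,2π) and Im V(x) > 0 on a set of positive Lebesgue measure. Let λ ∈ ℝ, and for j = 1, 2 let ρ_j ∈ ℂ, k_j ∈ L²((0,2π); ℂ), and let f_j : [0,2π] → ℂ be not identically zero and absolutely continuous with derivative f_j′, satisfying f_j(0) = ρ_j f_j(2π) and, for almost every x ∈ (0,2π), both i f_j′(x) + V(x) f_j(x) + f_j(2π) k_j(x) = λ f_j(x) and i f_j′(x) + conj(V(x)) f_j(x) = λ f_j(x). Then ρ₁ = ρ₂ and k₁(x) = k₂(x) for almost every x ∈ (0,2π). -/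

import Mathlib

open MeasureTheory Real Complex

/-- `f : [0,2π] → ℂ` is absolutely continuous with derivative `f'`:
`f' ∈ L¹(0,2π)` and `f x = f 0 + ∫₀ˣ f'` for all `x ∈ [0,2π]`. -/
def IsACWithDeriv (f f' : ℝ → ℂ) : Prop :=
  MeasureTheory.IntegrableOn f' (Set.Ioc 0 (2 * Real.pi)) ∧
    ∀ x ∈ Set.Icc (0:ℝ) (2 * Real.pi), f x = f 0 + ∫ t in (0:ℝ)..x, f' t

/-! Since `λ` is real, the adjoint equation says that every `f_j` solves the same linear equation
`f' = i (conj V - λ) f` with essentially bounded coefficient. A Picard-type estimate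
`‖f x‖ ≤ C (M |x - y|)ⁿ / n!` shows that a solution vanishing at one point vanishes identically, so
`f₁ (2π)`, `f₂ (2π)` are nonzero and `f₂ (2π) f₁ = f₁ (2π) f₂`. The boundary conditions then force
`ρ₁ = ρ₂`, and subtracting the two equations gives `f_j (2π) k_j = (conj V - V) f_j`, so
`k₁ = k₂` because `f₁ / f₁ (2π) = f₂ / f₂ (2π)`. -/

open Set Filter Topology intervalIntegral
open scoped Nat Interval

namespace IsACWithDeriv

variable {f f' g g' : ℝ → ℂ}

theorem intervalIntegrable (hf : IsACWithDeriv f f') {x y : ℝ} (hx : x ∈ Icc 0 (2 * π))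
    (hy : y ∈ Icc 0 (2 * π)) : IntervalIntegrable f' volume x y :=
  intervalIntegrable_iff.2 <|
    hf.1.mono_set (Ioc_subset_Ioc (le_min hx.1 hy.1) (max_le hx.2 hy.2))

theorem sub_eq_integral (hf : IsACWithDeriv f f') {x y : ℝ} (hx : x ∈ Icc 0 (2 * π))
    (hy : y ∈ Icc 0 (2 * π)) : f x - f y = ∫ t in y..x, f' t := by
  have h0 : (0 : ℝ) ∈ Icc 0 (2 * π) := left_mem_Icc.2 (by positivity)
  rw [hf.2 x hx, hf.2 y hy, ← integral_interval_sub_left (hf.intervalIntegrable h0 hx)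
    (hf.intervalIntegrable h0 hy)]
  ring

theorem norm_le (hf : IsACWithDeriv f f') {x : ℝ} (hx : x ∈ Icc 0 (2 * π)) :
    ‖f x‖ ≤ ‖f 0‖ + ∫ t in Ioc 0 (2 * π), ‖f' t‖ := by
  rw [hf.2 x hx]
  refine (norm_add_le _ _).trans (add_le_add_right (norm_integral_le_integral_norm_uIoc.trans ?_) _)
  exact setIntegral_mono_set hf.1.norm (ae_of_all _ fun t => norm_nonneg _)
    (Ioc_subset_Ioc (le_min le_rfl hx.1) (max_le (by positivity) hx.2)).eventuallyLE

theorem const_mul_sub (hf : IsACWithDeriv f f') (hg : IsACWithDeriv g g') (a b : ℂ) :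
    IsACWithDeriv (fun x => a * f x - b * g x) (fun x => a * f' x - b * g' x) := by
  refine ⟨(hf.1.const_mul a).sub (hg.1.const_mul b), fun x hx => ?_⟩
  dsimp only
  have h0 : (0 : ℝ) ∈ Icc 0 (2 * π) := left_mem_Icc.2 (by positivity)
  rw [integral_sub ((hf.intervalIntegrable h0 hx).const_mul a)
    ((hg.intervalIntegrable h0 hx).const_mul b), intervalIntegral.integral_const_mul,
    intervalIntegral.integral_const_mul, hf.2 x hx, hg.2 x hx]
  ring

theorem norm_le_mul_pow_div_factorial (hf : IsACWithDeriv f f') {M C : ℝ} (hM : 0 ≤ M)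
    (hbound : ∀ᵐ t ∂volume.restrict (Ioc 0 (2 * π)), ‖f' t‖ ≤ M * ‖f t‖)
    (hC : ∀ x ∈ Icc 0 (2 * π), ‖f x‖ ≤ C) {y : ℝ} (hy : y ∈ Icc 0 (2 * π)) (hfy : f y = 0)
    (n : ℕ) : ∀ x ∈ Icc 0 (2 * π), ‖f x‖ ≤ C * (M * |x - y|) ^ n / n ! := by
  induction n with
  | zero => simpa using hC
  | succ n ih =>
    intro x hx
    have hsub : Ι y x ⊆ Ioc 0 (2 * π) := Ioc_subset_Ioc (le_min hy.1 hx.1) (max_le hy.2 hx.2)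
    have hbound' : ∀ᵐ t ∂volume.restrict (Ι y x),
        ‖f' t‖ ≤ C * M ^ (n + 1) / n ! * |t - y| ^ n := by
      filter_upwards [ae_restrict_of_ae_restrict_of_subset hsub hbound,
        ae_restrict_mem measurableSet_uIoc] with t ht htyx
      calc ‖f' t‖ ≤ M * ‖f t‖ := ht
        _ ≤ M * (C * (M * |t - y|) ^ n / n !) :=
          mul_le_mul_of_nonneg_left (ih t (Ioc_subset_Icc_self (hsub htyx))) hM
        _ = C * M ^ (n + 1) / n ! * |t - y| ^ n := by ring
    calc ‖f x‖ = ‖∫ t in y..x, f' t‖ := by rw [← hf.sub_eq_integral hx hy, hfy, sub_zero]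
      _ ≤ ∫ t in Ι y x, ‖f' t‖ := norm_integral_le_integral_norm_uIoc
      _ ≤ ∫ t in Ι y x, C * M ^ (n + 1) / n ! * |t - y| ^ n :=
          integral_mono_ae (hf.1.mono_set hsub).norm
            (Continuous.integrableOn_uIoc (by fun_prop)) hbound'
      _ = C * (M * |x - y|) ^ (n + 1) / (n + 1)! := by
          rw [MeasureTheory.integral_const_mul, integral_pow_abs_sub_uIoc, Nat.factorial_succ]
          push_cast
          field_simp
          ring

theorem eqOn_zero_of_norm_deriv_le (hf : IsACWithDeriv f f') {M : ℝ}
    (hbound : ∀ᵐ t ∂volume.restrict (Ioo 0 (2 * π)), ‖f' t‖ ≤ M * ‖f t‖)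
    {y : ℝ} (hy : y ∈ Icc 0 (2 * π)) (hfy : f y = 0) : EqOn f 0 (Icc 0 (2 * π)) := by
  have hbound' : ∀ᵐ t ∂volume.restrict (Ioc 0 (2 * π)), ‖f' t‖ ≤ |M| * ‖f t‖ := by
    rw [← Measure.restrict_congr_set Ioo_ae_eq_Ioc]
    filter_upwards [hbound] with t ht
    exact ht.trans (mul_le_mul_of_nonneg_right (le_abs_self M) (norm_nonneg _))
  intro x hx
  set C := ‖f 0‖ + ∫ t in Ioc 0 (2 * π), ‖f' t‖
  have hlim : Tendsto (fun n : ℕ => C * (|M| * |x - y|) ^ n / n !) atTop (𝓝 0) := by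
    simpa [mul_div_assoc] using (FloorSemiring.tendsto_pow_div_factorial_atTop _).const_mul C
  exact norm_le_zero_iff.mp <| ge_of_tendsto' hlim fun n =>
    hf.norm_le_mul_pow_div_factorial (abs_nonneg M) hbound' (fun _ => hf.norm_le) hy hfy n x hx

end IsACWithDeriv

section LinearODE

variable {c f₁ f₁' f₂ f₂' : ℝ → ℂ} {M : ℝ}

theorem norm_deriv_le_of_deriv_eq_mul
    (hc : ∀ᵐ x ∂volume.restrict (Ioo 0 (2 * π)), ‖c x‖ ≤ M)
    (hode : ∀ᵐ x ∂volume.restrict (Ioo 0 (2 * π)), f₁' x = c x * f₁ x) :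
    ∀ᵐ x ∂volume.restrict (Ioo 0 (2 * π)), ‖f₁' x‖ ≤ M * ‖f₁ x‖ := by
  filter_upwards [hc, hode] with x hcx hx
  rw [hx, norm_mul]
  exact mul_le_mul_of_nonneg_right hcx (norm_nonneg _)

theorem ne_zero_of_deriv_eq_mul (hc : ∀ᵐ x ∂volume.restrict (Ioo 0 (2 * π)), ‖c x‖ ≤ M)
    (hf₁ : IsACWithDeriv f₁ f₁')
    (hode : ∀ᵐ x ∂volume.restrict (Ioo 0 (2 * π)), f₁' x = c x * f₁ x)
    (hne : ∃ x ∈ Icc 0 (2 * π), f₁ x ≠ 0) {y : ℝ} (hy : y ∈ Icc 0 (2 * π)) : f₁ y ≠ 0 := by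
  obtain ⟨x, hx, hfx⟩ := hne
  exact fun hfy => hfx <|
    hf₁.eqOn_zero_of_norm_deriv_le (norm_deriv_le_of_deriv_eq_mul hc hode) hy hfy hx

theorem mul_eq_mul_of_deriv_eq_mul (hc : ∀ᵐ x ∂volume.restrict (Ioo 0 (2 * π)), ‖c x‖ ≤ M)
    (hf₁ : IsACWithDeriv f₁ f₁') (hf₂ : IsACWithDeriv f₂ f₂')
    (hode₁ : ∀ᵐ x ∂volume.restrict (Ioo 0 (2 * π)), f₁' x = c x * f₁ x)
    (hode₂ : ∀ᵐ x ∂volume.restrict (Ioo 0 (2 * π)), f₂' x = c x * f₂ x)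
    {y : ℝ} (hy : y ∈ Icc 0 (2 * π)) {x : ℝ} (hx : x ∈ Icc 0 (2 * π)) :
    f₂ y * f₁ x = f₁ y * f₂ x := by
  have hode : ∀ᵐ t ∂volume.restrict (Ioo 0 (2 * π)),
      f₂ y * f₁' t - f₁ y * f₂' t = c t * (f₂ y * f₁ t - f₁ y * f₂ t) := by
    filter_upwards [hode₁, hode₂] with t h₁ h₂
    rw [h₁, h₂]
    ring
  refine sub_eq_zero.mp <| (hf₁.const_mul_sub hf₂ (f₂ y) (f₁ y)).eqOn_zero_of_norm_deriv_le
    (norm_deriv_le_of_deriv_eq_mul hc hode) hy ?_ hx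
  ring

end LinearODE

theorem uniqueness_of_extension_with_real_eigenvalue
    (V : ℝ → ℂ)
    (hV : MeasureTheory.MemLp V ⊤ (MeasureTheory.volume.restrict (Set.Ioo 0 (2 * Real.pi))))
    (lam : ℝ) (ρ₁ ρ₂ : ℂ) (k₁ k₂ : ℝ → ℂ)
    (f₁ f₁' f₂ f₂' : ℝ → ℂ)
    (hf₁ : IsACWithDeriv f₁ f₁') (hf₁0 : ∃ x ∈ Set.Icc (0:ℝ) (2 * Real.pi), f₁ x ≠ 0)
    (hf₂ : IsACWithDeriv f₂ f₂') (hf₂0 : ∃ x ∈ Set.Icc (0:ℝ) (2 * Real.pi), f₂ x ≠ 0)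
    (hbc₁ : f₁ 0 = ρ₁ * f₁ (2 * Real.pi)) (hbc₂ : f₂ 0 = ρ₂ * f₂ (2 * Real.pi))
    (heq₁ : ∀ᵐ x ∂(MeasureTheory.volume.restrict (Set.Ioo 0 (2 * Real.pi))),
      Complex.I * f₁' x + V x * f₁ x + f₁ (2 * Real.pi) * k₁ x = (lam : ℂ) * f₁ x)
    (hadj₁ : ∀ᵐ x ∂(MeasureTheory.volume.restrict (Set.Ioo 0 (2 * Real.pi))),
      Complex.I * f₁' x + (starRingEnd ℂ) (V x) * f₁ x = (lam : ℂ) * f₁ x)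
    (heq₂ : ∀ᵐ x ∂(MeasureTheory.volume.restrict (Set.Ioo 0 (2 * Real.pi))),
      Complex.I * f₂' x + V x * f₂ x + f₂ (2 * Real.pi) * k₂ x = (lam : ℂ) * f₂ x)
    (hadj₂ : ∀ᵐ x ∂(MeasureTheory.volume.restrict (Set.Ioo 0 (2 * Real.pi))),
      Complex.I * f₂' x + (starRingEnd ℂ) (V x) * f₂ x = (lam : ℂ) * f₂ x) :
    ρ₁ = ρ₂ ∧
      ∀ᵐ x ∂(MeasureTheory.volume.restrict (Set.Ioo 0 (2 * Real.pi))), k₁ x = k₂ x := by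
  set c : ℝ → ℂ := fun x => I * ((starRingEnd ℂ) (V x) - lam)
  have hc : ∀ᵐ x ∂volume.restrict (Ioo 0 (2 * π)),
      ‖c x‖ ≤ lpNorm V ⊤ (volume.restrict (Ioo 0 (2 * π))) + |lam| := by
    filter_upwards [ae_le_lpNorm_exponent_top hV] with x hx
    simpa [c] using (norm_sub_le ((starRingEnd ℂ) (V x)) (lam : ℂ)).trans (by simpa using hx)
  have hode₁ : ∀ᵐ x ∂volume.restrict (Ioo 0 (2 * π)), f₁' x = c x * f₁ x := by
    filter_upwards [hadj₁] with x hx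
    linear_combination -I * hx + f₁' x * I_sq
  have hode₂ : ∀ᵐ x ∂volume.restrict (Ioo 0 (2 * π)), f₂' x = c x * f₂ x := by
    filter_upwards [hadj₂] with x hx
    linear_combination -I * hx + f₂' x * I_sq
  have hT : 2 * π ∈ Icc 0 (2 * π) := right_mem_Icc.2 (by positivity)
  have hf₁T := ne_zero_of_deriv_eq_mul hc hf₁ hode₁ hf₁0 hT
  have hf₂T := ne_zero_of_deriv_eq_mul hc hf₂ hode₂ hf₂0 hT
  have hprop : ∀ x ∈ Icc 0 (2 * π), f₂ (2 * π) * f₁ x = f₁ (2 * π) * f₂ x :=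
    fun _ => mul_eq_mul_of_deriv_eq_mul hc hf₁ hf₂ hode₁ hode₂ hT
  refine ⟨mul_left_cancel₀ (mul_ne_zero hf₁T hf₂T) ?_, ?_⟩
  · linear_combination f₁ (2 * π) * hbc₂ - f₂ (2 * π) * hbc₁ + hprop 0 (left_mem_Icc.2 hT.1)
  · filter_upwards [heq₁, hadj₁, heq₂, hadj₂, ae_restrict_mem measurableSet_Ioo]
      with x e₁ a₁ e₂ a₂ hx
    refine mul_left_cancel₀ (mul_ne_zero hf₁T hf₂T) ?_
    linear_combination f₂ (2 * π) * (e₁ - a₁) - f₁ (2 * π) * (e₂ - a₂)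
      + ((starRingEnd ℂ) (V x) - V x) * hprop x (Ioo_subset_Icc_self hx)
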